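/- arXiv:math/0412024 — 2 statements merged into one kernel-verified Lean document; each statement's English description precedes it below -/
import Mathlib

section
/- Let M be a cancellative monoid such that for all a, b ∈ M there exist c, d ∈ M with ac = bd (Öre's conditions). Then the canonical homomorphism from M to its group of fractions G(M) is injective. -/
/-- The group of fractions of a monoid `M`: the group presented by the elements of `M`
as generators, with a relation `a * b = c` whenever `a * b = c` holds in `M`. -/
def GroupOfFractions (M : Type*) [Monoid M] : Type _ :=
  PresentedGroup {w : FreeGroup M | ∃ a b : M,
    w = FreeGroup.of a * FreeGroup.of b * (FreeGroup.of (a * b))⁻¹}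

instance (M : Type*) [Monoid M] : Group (GroupOfFractions M) := by
  unfold GroupOfFractions; infer_instance

/-- The canonical homomorphism `M → G(M)`. -/
def toGroupOfFractions (M : Type*) [Monoid M] (a : M) : GroupOfFractions M :=
  PresentedGroup.of a

section Aux

variable {M : Type*} [CancelMonoid M]
  (hOre : ∀ a b : M, ∃ c d : M, a * c = b * d)

/-- The Ore set structure on `⊤ : Submonoid Mᵐᵒᵖ` coming from the Ore condition. -/
noncomputable def oreAuxOreSet : OreLocalization.OreSet (⊤ : Submonoid Mᵐᵒᵖ) where
  ore_right_cancel r₁ r₂ s h := ⟨1, by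
    have : r₁ = r₂ := mul_right_cancel h
    rw [this]⟩
  oreNum r s := MulOpposite.op (hOre r.unop s.1.unop).choose_spec.choose
  oreDenom r s := ⟨MulOpposite.op (hOre r.unop s.1.unop).choose, trivial⟩
  ore_eq r s := by
    have h := (hOre r.unop s.1.unop).choose_spec.choose_spec
    apply MulOpposite.unop_injective
    simpa using h

end Aux

theorem ore_embeds_in_group_of_fractions {M : Type*} [CancelMonoid M]
    (hOre : ∀ a b : M, ∃ c d : M, a * c = b * d) :
    Function.Injective (toGroupOfFractions M) := by
  letI : OreLocalization.OreSet (⊤ : Submonoid Mᵐᵒᵖ) := oreAuxOreSet hOre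
  set L := OreLocalization (⊤ : Submonoid Mᵐᵒᵖ) Mᵐᵒᵖ with hL
  -- numeratorHom is injective
  have hnum_inj : Function.Injective
      (OreLocalization.numeratorHom : Mᵐᵒᵖ →* L) := by
    intro r₁ r₂ h
    rw [OreLocalization.numeratorHom_apply, OreLocalization.numeratorHom_apply,
      OreLocalization.oreDiv_eq_iff] at h
    obtain ⟨u, v, h₁, h₂⟩ := h
    simp only [OneMemClass.coe_one, mul_one] at h₂
    -- h₂ : (u : Mᵐᵒᵖ) * 1 = v * 1
    have huv : (u : Mᵐᵒᵖ) = v := h₂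
    rw [Submonoid.smul_def, smul_eq_mul, smul_eq_mul, huv] at h₁
    exact (mul_left_cancel h₁).symm
  -- every image is a unit
  have hunit : ∀ r : Mᵐᵒᵖ, IsUnit (OreLocalization.numeratorHom r : L) :=
    fun r => OreLocalization.numerator_isUnit (⟨r, trivial⟩ : (⊤ : Submonoid Mᵐᵒᵖ))
  -- the map into the opposite group of units
  set f : M → Lˣᵐᵒᵖ := fun a => MulOpposite.op (hunit (MulOpposite.op a)).unit with hf
  have hmul : ∀ a b : M, f a * f b = f (a * b) := by
    intro a b
    apply MulOpposite.unop_injective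
    apply Units.ext
    simp only [hf, MulOpposite.unop_op, MulOpposite.unop_mul, Units.val_mul,
      IsUnit.unit_spec, ← map_mul]
    rfl
  have hrel : ∀ r ∈ {w : FreeGroup M | ∃ a b : M,
      w = FreeGroup.of a * FreeGroup.of b * (FreeGroup.of (a * b))⁻¹},
      FreeGroup.lift f r = 1 := by
    rintro r ⟨a, b, rfl⟩
    simp only [map_mul, map_inv, FreeGroup.lift_apply_of]
    rw [hmul a b, mul_inv_cancel]
  set φ : GroupOfFractions M →* Lˣᵐᵒᵖ := PresentedGroup.toGroup hrel with hφ
  have hcomp : ∀ a : M, φ (toGroupOfFractions M a) = f a := fun a =>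
    PresentedGroup.toGroup.of hrel
  have hfinj : Function.Injective f := by
    intro a b h
    have := congrArg (fun x => ((MulOpposite.unop x : Lˣ) : L)) h
    simp only [hf, MulOpposite.unop_op, IsUnit.unit_spec] at this
    exact MulOpposite.op_injective (hnum_inj this)
  intro a b h
  apply hfinj
  rw [← hcomp a, ← hcomp b, h]
end

section
/- In the braid group B_n with standard generators σ_1, …, σ_{n−1} (subject to σ_iσ_j = σ_jσ_i for |i−j| > 1 and σ_iσ_jσ_i = σ_jσ_iσ_j for |i−j| = 1), the element Δ_n = (σ_1)(σ_2σ_1)⋯(σ_{n−1}⋯σ_1) satisfies Δ_n σ_i Δ_n⁻¹ = σ_{n−i} for all 1 ≤ i ≤ n−1. -/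
/-- The braid relations on `n` strings: generators `σ_1, …, σ_{n-1}` are indexed by
`Fin (n-1)` (index `i` corresponds to `σ_{i+1}`). -/
def braidRels (n : ℕ) : Set (FreeGroup (Fin (n - 1))) :=
  {w | ∃ i j : Fin (n - 1),
      ((i : ℕ) + 1 < (j : ℕ) ∧
        w = FreeGroup.of i * FreeGroup.of j * (FreeGroup.of j * FreeGroup.of i)⁻¹) ∨
      ((i : ℕ) + 1 = (j : ℕ) ∧
        w = FreeGroup.of i * FreeGroup.of j * FreeGroup.of i *
          (FreeGroup.of j * FreeGroup.of i * FreeGroup.of j)⁻¹)}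

/-- The braid group on `n` strings. -/
def BraidGroup (n : ℕ) : Type := PresentedGroup (braidRels n)

instance (n : ℕ) : Group (BraidGroup n) := by unfold BraidGroup; infer_instance

/-- The standard generator `σ_i` of `B_n`, for `1 ≤ i ≤ n-1` (and `1` otherwise). -/
def sigma (n : ℕ) (i : ℕ) : BraidGroup n :=
  if h : 1 ≤ i ∧ i ≤ n - 1 then
    PresentedGroup.of (⟨i - 1, by omega⟩ : Fin (n - 1))
  else 1

/-- Garside's fundamental element `Δ_n = (σ_1)(σ_2 σ_1) ⋯ (σ_{n-1} ⋯ σ_1)`. -/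
def fundamentalElt (n : ℕ) : BraidGroup n :=
  ((List.range (n - 1)).map (fun k =>
    (((List.range (k + 1)).reverse).map (fun i => sigma n (i + 1))).prod)).prod

lemma rel_eq_one {n : ℕ} {w : FreeGroup (Fin (n-1))} (hw : w ∈ braidRels n) :
    (PresentedGroup.mk (braidRels n) w : BraidGroup n) = 1 :=
  (QuotientGroup.eq_one_iff w).mpr (Subgroup.subset_normalClosure hw)

lemma sigma_comm (n a b : ℕ) (h : a + 2 ≤ b) :
    sigma n a * sigma n b = sigma n b * sigma n a := by
  unfold sigma
  by_cases ha : 1 ≤ a ∧ a ≤ n - 1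
  · by_cases hb : 1 ≤ b ∧ b ≤ n - 1
    · erw [dif_pos ha, dif_pos hb]
      set i : Fin (n-1) := ⟨a - 1, by omega⟩
      set j : Fin (n-1) := ⟨b - 1, by omega⟩
      have hr : (FreeGroup.of i * FreeGroup.of j * (FreeGroup.of j * FreeGroup.of i)⁻¹ :
          FreeGroup (Fin (n-1))) ∈ braidRels n :=
        ⟨i, j, Or.inl ⟨by simp [i, j]; omega, rfl⟩⟩
      have := rel_eq_one hr
      simp only [map_mul, map_inv] at this
      exact mul_inv_eq_one.mp this
    · erw [dif_neg hb]; group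
  · erw [dif_neg ha]; group

lemma sigma_braid (n a : ℕ) (h1 : 1 ≤ a) (h2 : a + 1 ≤ n - 1) :
    sigma n a * sigma n (a+1) * sigma n a = sigma n (a+1) * sigma n a * sigma n (a+1) := by
  unfold sigma
  erw [dif_pos ⟨h1, by omega⟩, dif_pos ⟨by omega, h2⟩]
  set i : Fin (n-1) := ⟨a - 1, by omega⟩
  set j : Fin (n-1) := ⟨a + 1 - 1, by omega⟩
  have hr : (FreeGroup.of i * FreeGroup.of j * FreeGroup.of i *
      (FreeGroup.of j * FreeGroup.of i * FreeGroup.of j)⁻¹ :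
      FreeGroup (Fin (n-1))) ∈ braidRels n :=
    ⟨i, j, Or.inr ⟨by simp [i, j]; omega, rfl⟩⟩
  have := rel_eq_one hr
  simp only [map_mul, map_inv] at this
  exact mul_inv_eq_one.mp this

/-- `Dw n k = σ_k σ_{k-1} ⋯ σ_1`. -/
def Dw (n k : ℕ) : BraidGroup n :=
  (((List.range k).reverse).map (fun i => sigma n (i + 1))).prod

lemma Dw_zero (n : ℕ) : Dw n 0 = 1 := rfl

lemma Dw_succ (n k : ℕ) : Dw n (k+1) = sigma n (k+1) * Dw n k := by
  unfold Dw
  rw [List.range_succ, List.reverse_append]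
  simp

/-- `Fw n m = D_1 D_2 ⋯ D_m`. -/
def Fw (n m : ℕ) : BraidGroup n :=
  ((List.range m).map (fun k => Dw n (k+1))).prod

lemma Fw_zero (n : ℕ) : Fw n 0 = 1 := rfl

lemma Fw_succ (n m : ℕ) : Fw n (m+1) = Fw n m * Dw n (m+1) := by
  unfold Fw
  rw [List.range_succ]
  simp

lemma fundamentalElt_eq (n : ℕ) : fundamentalElt n = Fw n (n-1) := rfl

lemma sigma_Dw_comm (n j k : ℕ) (h : k + 2 ≤ j) :
    sigma n j * Dw n k = Dw n k * sigma n j := by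
  induction k with
  | zero => simp [Dw_zero]
  | succ k ih =>
    rw [Dw_succ, ← mul_assoc, ← sigma_comm n (k+1) j (by omega), mul_assoc,
      ih (by omega), mul_assoc]

lemma lemA (n j k : ℕ) (h1 : 1 ≤ j) (h2 : j + 1 ≤ k) (h3 : k ≤ n - 1) :
    sigma n j * Dw n k = Dw n k * sigma n (j+1) := by
  induction k with
  | zero => omega
  | succ k ih =>
    rcases Nat.lt_or_ge (j+1) (k+1) with hlt | hge
    · -- j ≤ k - 1, i.e. j+1 ≤ k
      rw [Dw_succ, ← mul_assoc, sigma_comm n j (k+1) (by omega), mul_assoc,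
        ih (by omega) (by omega), ← mul_assoc]
    · -- j = k
      have hj : j = k := by omega
      subst hj
      obtain ⟨k', rfl⟩ : ∃ k', j = k' + 1 := ⟨j - 1, by omega⟩
      have hc : sigma n (k'+2) * Dw n k' = Dw n k' * sigma n (k'+2) :=
        sigma_Dw_comm n (k'+2) k' (by omega)
      calc sigma n (k'+1) * Dw n (k'+1+1)
          = sigma n (k'+1) * sigma n (k'+2) * sigma n (k'+1) * Dw n k' := by
            rw [Dw_succ, Dw_succ]; group
        _ = sigma n (k'+2) * sigma n (k'+1) * sigma n (k'+2) * Dw n k' := by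
            rw [sigma_braid n (k'+1) (by omega) (by omega)]
        _ = sigma n (k'+2) * sigma n (k'+1) * (Dw n k' * sigma n (k'+2)) := by
            rw [mul_assoc _ _ (Dw n k'), hc]
        _ = Dw n (k'+1+1) * sigma n (k'+1+1) := by
            rw [Dw_succ, Dw_succ]; group

lemma lemB (n k : ℕ) (h : k + 1 ≤ n - 1) :
    sigma n (k+1) * (Dw n k * Dw n (k+1)) = Dw n k * Dw n (k+1) * sigma n 1 := by
  induction k with
  | zero => simp [Dw_zero, Dw_succ]
  | succ k ih =>
    have hDk : Dw n (k+1) = sigma n (k+1) * Dw n k := Dw_succ n k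
    have hcomm : Dw n k * sigma n (k+2) = sigma n (k+2) * Dw n k :=
      (sigma_Dw_comm n (k+2) k (by omega)).symm
    calc sigma n (k+2) * (Dw n (k+1) * Dw n (k+2))
        = sigma n (k+2) * (sigma n (k+1) * Dw n k * (sigma n (k+2) * Dw n (k+1))) := by
          rw [Dw_succ n (k+1), hDk]
      _ = sigma n (k+2) * sigma n (k+1) * (Dw n k * sigma n (k+2)) * Dw n (k+1) := by
          group
      _ = sigma n (k+2) * sigma n (k+1) * sigma n (k+2) * (Dw n k * Dw n (k+1)) := by
          rw [hcomm]; group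
      _ = sigma n (k+1) * sigma n (k+2) * sigma n (k+1) * (Dw n k * Dw n (k+1)) := by
          rw [← sigma_braid n (k+1) (by omega) (by omega)]
      _ = sigma n (k+1) * sigma n (k+2) * (sigma n (k+1) * (Dw n k * Dw n (k+1))) := by
          group
      _ = sigma n (k+1) * sigma n (k+2) * (Dw n k * Dw n (k+1) * sigma n 1) := by
          rw [ih (by omega)]
      _ = sigma n (k+1) * (sigma n (k+2) * Dw n k) * Dw n (k+1) * sigma n 1 := by
          group
      _ = sigma n (k+1) * Dw n k * (sigma n (k+2) * Dw n (k+1)) * sigma n 1 := by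
          rw [← hcomm]; group
      _ = Dw n (k+1) * Dw n (k+2) * sigma n 1 := by
          rw [← hDk, ← Dw_succ n (k+1)]

lemma sigma_Fw_comm (n j m : ℕ) (h : m + 2 ≤ j) :
    sigma n j * Fw n m = Fw n m * sigma n j := by
  induction m with
  | zero => simp [Fw_zero]
  | succ m ih =>
    rw [Fw_succ, ← mul_assoc, ih (by omega), mul_assoc,
      sigma_Dw_comm n j (m+1) (by omega), mul_assoc]

lemma mainlem (n m : ℕ) : ∀ i, 1 ≤ i → i ≤ m → m ≤ n - 1 →
    Fw n m * sigma n i = sigma n (m + 1 - i) * Fw n m := by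
  induction m with
  | zero => intro i h1 h2 _; omega
  | succ m ih =>
    intro i h1 h2 h3
    rcases Nat.lt_or_ge 1 i with hi | hi
    · -- i ≥ 2 : D_{m+1} σ_i = σ_{i-1} D_{m+1}
      have hd : Dw n (m+1) * sigma n i = sigma n (i-1) * Dw n (m+1) := by
        have := lemA n (i-1) (m+1) (by omega) (by omega) (by omega)
        rw [show i - 1 + 1 = i by omega] at this
        exact this.symm
      calc Fw n (m+1) * sigma n i
          = Fw n m * (Dw n (m+1) * sigma n i) := by rw [Fw_succ]; group
        _ = Fw n m * sigma n (i-1) * Dw n (m+1) := by rw [hd]; group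
        _ = sigma n (m + 1 - (i-1)) * Fw n m * Dw n (m+1) := by
            rw [ih (i-1) (by omega) (by omega) (by omega)]
        _ = sigma n (m + 1 + 1 - i) * Fw n (m+1) := by
            rw [show m + 1 - (i-1) = m + 1 + 1 - i by omega, Fw_succ]; group
    · -- i = 1
      have hi1 : i = 1 := by omega
      subst hi1
      rcases Nat.lt_or_ge m 1 with hm | hm
      · interval_cases m
        simp [Fw_succ, Fw_zero, Dw_succ, Dw_zero]
      · obtain ⟨m', rfl⟩ : ∃ m', m = m' + 1 := ⟨m - 1, by omega⟩
        have hB := lemB n (m'+1) (by omega)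
        calc Fw n (m'+2) * sigma n 1
            = Fw n m' * (Dw n (m'+1) * Dw n (m'+2) * sigma n 1) := by
              rw [Fw_succ, Fw_succ]; group
          _ = Fw n m' * (sigma n (m'+2) * (Dw n (m'+1) * Dw n (m'+2))) := by rw [← hB]
          _ = (Fw n m' * sigma n (m'+2)) * (Dw n (m'+1) * Dw n (m'+2)) := by group
          _ = sigma n (m'+2) * Fw n m' * (Dw n (m'+1) * Dw n (m'+2)) := by
              rw [← sigma_Fw_comm n (m'+2) m' (by omega)]
          _ = sigma n (m' + 1 + 1 + 1 - 1) * Fw n (m'+2) := by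
              rw [show m' + 1 + 1 + 1 - 1 = m' + 2 by omega, Fw_succ, Fw_succ]; group

theorem fundamentalElt_conj_sigma (n : ℕ) (i : ℕ) (h1 : 1 ≤ i) (h2 : i ≤ n - 1) :
    fundamentalElt n * sigma n i * (fundamentalElt n)⁻¹ = sigma n (n - i) := by
  have h := mainlem n (n-1) i h1 h2 le_rfl
  rw [fundamentalElt_eq]
  rw [show n - 1 + 1 - i = n - i by omega] at h
  rw [h]
  group
end
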